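/- arXiv:0707.0537 — 5 statements merged into one kernel-verified Lean document; each statement's English description precedes it below -/
import Mathlib

section
/- Let δ, δ' ≥ 2 be real numbers and fix x ∈ ℝ. Suppose (m_{n,p})_{(n,p)∈ℕ×ℕ} is a family of differentiable functions m_{n,p} : [0,∞) → ℝ such that m_{0,0}(t) = 1 for all t ≥ 0, m_{n,p}(0) = x^n (1−x)^p, and for every (n,p) ≠ (0,0) and t ≥ 0, m_{n,p}'(t) = −a_{n+p} m_{n,p}(t) + c_n(δ') m_{n−1,p}(t) + c_p(δ) m_{n,p−1}(t), where any term with a negative index is omitted (consistently with c_0(γ) = 0). Then for all (n,p) ∈ ℕ×ℕ and all t ≥ 0: m_{n,p}(t) = e^{−a_{n+p} t} x^n (1−x)^p + Σ_{0≤k≤n, 0≤l≤p, (k,l)≠(0,0)} C(k+l, k) · (Π_{r=n−k+1}^{n} c_r(δ')) · (Π_{s=p−l+1}^{p} c_s(δ)) · B_t(a_{n+p}, a_{n+p−1}, …, a_{n+p−(k+l)}) · x^{n−k} (1−x)^{p−l}, where C(m,k) denotes the binomial coefficient and an empty product equals 1. -/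
open Finset Real

/-- `aC δ δ' n = n (2(n-1) + δ + δ')`. -/
noncomputable def aC (δ δ' : ℝ) (n : ℕ) : ℝ := (n : ℝ) * (2 * ((n : ℝ) - 1) + δ + δ')

/-- `cC γ n = n (2(n-1) + γ)`. -/
noncomputable def cC (γ : ℝ) (n : ℕ) : ℝ := (n : ℝ) * (2 * ((n : ℝ) - 1) + γ)

/-- `Bt t k b = B_t(b 0, …, b k)` for strictly decreasing `b 0 > b 1 > … > b k`. -/
noncomputable def Bt (t : ℝ) (k : ℕ) (b : ℕ → ℝ) : ℝ :=
  (-1 : ℝ) ^ k * ∑ j ∈ Finset.range (k + 1),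
    (-1 : ℝ) ^ j * Real.exp (-(b j) * t) /
      ∏ l ∈ (Finset.range (k + 1)).erase j, |b j - b l|


/-!
Write `D₁ v (n, p) = c₁ n * v (n - 1) p` and `D₂ v (n, p) = c₂ p * v n (p - 1)`; these lowering
operators commute, and with `D = D₁ + D₂` the system reads `m' = -a (n + p) * m + D m`.
Up to the sign `(-1) ^ k`, `B_t(b₀, …, b_k)` is the divided difference of `s ↦ exp (-s t)` at the
nodes `b₀, …, b_k`. Hence
`d/dt B_t(b₀, …, b_{k+1}) = -b₀ B_t(b₀, …, b_{k+1}) + B_t(b₁, …, b_{k+1})`, and for `k ≥ 1` it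
vanishes at `t = 0`, being a divided difference of a constant. So
`∑ j, B_t(a (n + p), …, a (n + p - j)) * (D ^ j u) (n, p)` solves the system with initial data `u`;
uniqueness for linear ODEs, by induction on `n + p`, identifies it with `m`, and expanding `D ^ j`
by the binomial theorem gives the double sum of the statement.
-/

theorem prod_erase_succ_range_succ' {M : Type*} [CommMonoid M] (f : ℕ → M) {k j : ℕ} :
    ∏ l ∈ (range (k + 2)).erase (j + 1), f l = f 0 * ∏ l ∈ (range (k + 1)).erase j, f (l + 1) := by
  rw [range_add_one', erase_insert_of_ne (by omega), prod_insert (by simp)]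
  erw [← map_erase, prod_map]
  rfl

theorem prod_range_sub_eq_prod_Icc {M : Type*} [CommMonoid M] (f : ℕ → M) {k n : ℕ}
    (hk : k ≤ n) : ∏ i ∈ range k, f (n - i) = ∏ r ∈ Icc (n - k + 1) n, f r := by
  refine prod_nbij' (fun i => n - i) (fun r => n - r) ?_ ?_ ?_ ?_ fun _ _ => rfl <;>
    intro i hi <;> simp only [mem_range, mem_Icc] at hi ⊢ <;> omega

theorem prod_range_sub_eq_zero {M : Type*} [CommMonoidWithZero M] {f : ℕ → M} (hf : f 0 = 0)
    {k n : ℕ} (hnk : n < k) : ∏ i ∈ range k, f (n - i) = 0 :=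
  prod_eq_zero (mem_range.2 hnk) (by simpa)

theorem eqOn_Ici_of_hasDerivWithinAt_linear {f g r : ℝ → ℝ} {c : ℝ}
    (hf : ∀ t, 0 ≤ t → HasDerivWithinAt f (c * f t + r t) (Set.Ici 0) t)
    (hg : ∀ t, 0 ≤ t → HasDerivWithinAt g (c * g t + r t) (Set.Ici 0) t)
    (h0 : f 0 = g 0) : Set.EqOn f g (Set.Ici 0) := by
  intro t ht
  have hcont : ∀ {h : ℝ → ℝ}, (∀ t, 0 ≤ t → HasDerivWithinAt h (c * h t + r t) (Set.Ici 0) t) →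
      ContinuousOn h (Set.Icc 0 t) := fun hh s hs =>
    (hh s hs.1).continuousWithinAt.mono Set.Icc_subset_Ici_self
  have hderiv : ∀ {h : ℝ → ℝ}, (∀ t, 0 ≤ t → HasDerivWithinAt h (c * h t + r t) (Set.Ici 0) t) →
      ∀ s ∈ Set.Ico 0 t, HasDerivWithinAt h (c * h s + r s) (Set.Ici s) s := fun hh s hs =>
    (hh s hs.1).mono (Set.Ici_subset_Ici.2 hs.1)
  exact ODE_solution_unique_of_mem_Icc_right (v := fun s y => c * y + r s) (s := fun _ => Set.univ)
    (fun s _ => ((lipschitzWith_smul c).add (LipschitzWith.const (r s))).lipschitzOnWith)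
    (hcont hf) (hderiv hf) (fun _ _ => trivial) (hcont hg) (hderiv hg) (fun _ _ => trivial) h0
    ⟨ht, le_rfl⟩

noncomputable def expDividedDiff (t : ℝ) (k : ℕ) (b : ℕ → ℝ) : ℝ :=
  ∑ j ∈ range (k + 1), exp (-b j * t) / ∏ l ∈ (range (k + 1)).erase j, (b j - b l)

section DividedDifference

variable {t : ℝ} {k : ℕ} {b : ℕ → ℝ}

theorem StrictAntiOn.injOn_range_succ (hb : StrictAntiOn b (Set.Iic k)) :
    Set.InjOn b (range (k + 1)) :=
  hb.injOn.mono fun j hj => by simpa [Nat.lt_succ_iff] using hj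

theorem prod_abs_sub_eq_neg_one_pow_mul (hb : StrictAntiOn b (Set.Iic k)) {j : ℕ} (hj : j ≤ k) :
    ∏ l ∈ (range (k + 1)).erase j, |b j - b l| =
      (-1) ^ j * ∏ l ∈ (range (k + 1)).erase j, (b j - b l) := by
  have hsign : ∀ l ∈ (range (k + 1)).erase j,
      |b j - b l| = (if l < j then -1 else 1) * (b j - b l) := by
    intro l hl
    simp only [mem_erase, mem_range] at hl
    rcases hl.1.lt_or_gt with hlj | hjl
    · rw [if_pos hlj, abs_of_neg (sub_neg.2 (hb (Set.mem_Iic.2 (by omega)) (Set.mem_Iic.2 hj) hlj)),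
        neg_one_mul]
    · rw [if_neg hjl.not_gt,
        abs_of_pos (sub_pos.2 (hb (Set.mem_Iic.2 hj) (Set.mem_Iic.2 (by omega)) hjl)), one_mul]
  rw [prod_congr rfl hsign, prod_mul_distrib, prod_ite, prod_const, prod_const, one_pow, mul_one]
  congr
  convert card_range j using 2
  ext l
  simp only [mem_filter, mem_erase, mem_range]
  omega

theorem Bt_eq_neg_one_pow_mul_expDividedDiff (hb : StrictAntiOn b (Set.Iic k)) :
    Bt t k b = (-1) ^ k * expDividedDiff t k b := by
  unfold Bt expDividedDiff
  congr 1
  refine sum_congr rfl fun j hj => ?_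
  rw [prod_abs_sub_eq_neg_one_pow_mul hb (by simpa [Nat.lt_succ_iff] using hj),
    mul_div_mul_left _ _ (pow_ne_zero j (by norm_num))]

theorem expDividedDiff_time_zero (hb : Set.InjOn b (range (k + 1))) (hk : k ≠ 0) :
    expDividedDiff 0 k b = 0 := by
  have hdeg : (1 : Polynomial ℝ).degree < #(range (k + 1)) := by
    rw [Polynomial.degree_one, card_range]
    exact_mod_cast k.succ_pos
  simpa [expDividedDiff, Polynomial.coeff_one, hk] using (Lagrange.coeff_eq_sum hb hdeg).symm

theorem hasDerivAt_expDividedDiff_succ (hb : Set.InjOn b (range (k + 2))) :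
    HasDerivAt (fun t => expDividedDiff t (k + 1) b)
      (-b 0 * expDividedDiff t (k + 1) b - expDividedDiff t k (fun j => b (j + 1))) t := by
  set P : ℕ → ℝ := fun j => ∏ l ∈ (range (k + 2)).erase j, (b j - b l)
  have hterm : ∀ j ∈ range (k + 2),
      HasDerivAt (fun t => exp (-b j * t) / P j) (-b j * (exp (-b j * t) / P j)) t := by
    intro j _
    refine (((hasDerivAt_id t).const_mul (-b j)).exp.div_const (P j)).congr_deriv ?_
    simp only [id, mul_one]
    ring
  refine (HasDerivAt.fun_sum hterm).congr_deriv ?_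
  have hshift : ∀ j < k + 1, (b 0 - b (j + 1)) * (exp (-b (j + 1) * t) / P (j + 1)) =
      -(exp (-b (j + 1) * t) / ∏ l ∈ (range (k + 1)).erase j, (b (j + 1) - b (l + 1))) := by
    intro j hj
    have hne : b (j + 1) - b 0 ≠ 0 := sub_ne_zero.2 fun h => by
      have := hb (mem_range.2 (by omega) : j + 1 ∈ range (k + 2)) (mem_range.2 (by omega)) h
      omega
    simp only [P, prod_erase_succ_range_succ' (fun l => b (j + 1) - b l)]
    field_simp
    ring
  calc ∑ j ∈ range (k + 2), -b j * (exp (-b j * t) / P j)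
      = ∑ j ∈ range (k + 2),
          (-b 0 * (exp (-b j * t) / P j) + (b 0 - b j) * (exp (-b j * t) / P j)) :=
        sum_congr rfl fun j _ => by ring
    _ = _ := by
        rw [sum_add_distrib, ← mul_sum, sum_range_succ' (fun j => (b 0 - b j) * _),
          sum_congr rfl fun j hj => hshift j (mem_range.1 hj)]
        simp [expDividedDiff, P, sub_eq_add_neg]

theorem Bt_order_zero : Bt t 0 b = exp (-b 0 * t) := by
  simp [Bt]

theorem Bt_time_zero (hb : StrictAntiOn b (Set.Iic k)) (hk : k ≠ 0) : Bt 0 k b = 0 := by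
  rw [Bt_eq_neg_one_pow_mul_expDividedDiff hb, expDividedDiff_time_zero hb.injOn_range_succ hk,
    mul_zero]

theorem hasDerivAt_Bt_succ (hb : StrictAntiOn b (Set.Iic (k + 1))) :
    HasDerivAt (fun t => Bt t (k + 1) b)
      (-b 0 * Bt t (k + 1) b + Bt t k (fun j => b (j + 1))) t := by
  have hb' : StrictAntiOn (fun j => b (j + 1)) (Set.Iic k) := fun i hi j hj hij =>
    hb (by simpa using hi) (by simpa using hj) (by omega)
  simp only [Bt_eq_neg_one_pow_mul_expDividedDiff hb, Bt_eq_neg_one_pow_mul_expDividedDiff hb']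
  refine ((hasDerivAt_expDividedDiff_succ hb.injOn_range_succ).const_mul _).congr_deriv ?_
  ring

end DividedDifference

def lowerFst (c : ℕ → ℝ) : Module.End ℝ (ℕ → ℕ → ℝ) where
  toFun v n p := c n * v (n - 1) p
  map_add' v w := by ext n p; simp only [Pi.add_apply, mul_add]
  map_smul' r v := by ext n p; simp only [Pi.smul_apply, smul_eq_mul, RingHom.id_apply]; ring

def lowerSnd (c : ℕ → ℝ) : Module.End ℝ (ℕ → ℕ → ℝ) where
  toFun v n p := c p * v n (p - 1)
  map_add' v w := by ext n p; simp only [Pi.add_apply, mul_add]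
  map_smul' r v := by ext n p; simp only [Pi.smul_apply, smul_eq_mul, RingHom.id_apply]; ring

def lower (c₁ c₂ : ℕ → ℝ) : Module.End ℝ (ℕ → ℕ → ℝ) := lowerFst c₁ + lowerSnd c₂

section Lowering

variable (c c₁ c₂ : ℕ → ℝ) (v : ℕ → ℕ → ℝ) (n p : ℕ)

@[simp] theorem lowerFst_apply : lowerFst c v n p = c n * v (n - 1) p := rfl

@[simp] theorem lowerSnd_apply : lowerSnd c v n p = c p * v n (p - 1) := rfl

theorem commute_lowerFst_lowerSnd : Commute (lowerFst c₁) (lowerSnd c₂) := by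
  ext v n p
  simp only [Module.End.mul_apply, lowerFst_apply, lowerSnd_apply]
  ring

theorem lowerFst_pow_apply (k : ℕ) :
    (lowerFst c ^ k) v n p = (∏ i ∈ range k, c (n - i)) * v (n - k) p := by
  induction k generalizing n with
  | zero => simp
  | succ k ih =>
    rw [pow_succ', Module.End.mul_apply, lowerFst_apply, ih, prod_range_succ']
    simp only [Nat.sub_sub, add_comm 1, Nat.sub_zero]
    ring

theorem lowerSnd_pow_apply (k : ℕ) :
    (lowerSnd c ^ k) v n p = (∏ i ∈ range k, c (p - i)) * v n (p - k) := by
  induction k generalizing p with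
  | zero => simp
  | succ k ih =>
    rw [pow_succ', Module.End.mul_apply, lowerSnd_apply, ih, prod_range_succ']
    simp only [Nat.sub_sub, add_comm 1, Nat.sub_zero]
    ring

theorem lower_pow_succ_apply (j : ℕ) :
    (lower c₁ c₂ ^ (j + 1)) v n p =
      c₁ n * (lower c₁ c₂ ^ j) v (n - 1) p + c₂ p * (lower c₁ c₂ ^ j) v n (p - 1) := by
  rw [pow_succ', Module.End.mul_apply]
  rfl

theorem lower_pow_apply (j : ℕ) :
    (lower c₁ c₂ ^ j) v n p = ∑ kl ∈ antidiagonal j, (j.choose kl.1 : ℝ) *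
      (∏ i ∈ range kl.1, c₁ (n - i)) * (∏ i ∈ range kl.2, c₂ (p - i)) *
        v (n - kl.1) (p - kl.2) := by
  rw [lower, (commute_lowerFst_lowerSnd c₁ c₂).add_pow']
  simp only [LinearMap.sum_apply, Finset.sum_apply, LinearMap.smul_apply, Module.End.mul_apply,
    Pi.smul_apply, lowerFst_pow_apply, lowerSnd_pow_apply]
  exact sum_congr rfl fun kl _ => by rw [nsmul_eq_mul]; ring

end Lowering

noncomputable def momentSolution (a c₁ c₂ : ℕ → ℝ) (u : ℕ → ℕ → ℝ) (n p : ℕ) (t : ℝ) : ℝ :=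
  ∑ j ∈ range (n + p + 1), Bt t j (fun i => a (n + p - i)) * (lower c₁ c₂ ^ j) u n p

theorem StrictMono.strictAntiOn_sub {a : ℕ → ℝ} (ha : StrictMono a) (N : ℕ) :
    StrictAntiOn (fun i => a (N - i)) (Set.Iic N) := fun i _ j hj hij =>
  ha (by rw [Set.mem_Iic] at hj; omega)

section MomentSolution

variable {a c₁ c₂ : ℕ → ℝ} {u : ℕ → ℕ → ℝ}

theorem momentSolution_time_zero (ha : StrictMono a) (n p : ℕ) :
    momentSolution a c₁ c₂ u n p 0 = u n p := by
  rw [momentSolution, sum_range_succ', sum_eq_zero fun j hj => ?_]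
  · simp [Bt_order_zero]
  · rw [Bt_time_zero ((ha.strictAntiOn_sub _).mono (Set.Iic_subset_Iic.2 (by simpa using hj)))
      j.succ_ne_zero, zero_mul]

/- At `n = 0` both sides vanish because `c₁ 0 = 0`; this absorbs the truncated `n - 1`. -/
theorem mul_momentSolution_sub_one_fst (hc₁ : c₁ 0 = 0) (n p : ℕ) (t : ℝ) :
    c₁ n * momentSolution a c₁ c₂ u (n - 1) p t =
      c₁ n * ∑ j ∈ range (n + p),
        Bt t j (fun i => a (n + p - (i + 1))) * (lower c₁ c₂ ^ j) u (n - 1) p := by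
  rcases n with _ | n
  · simp [hc₁]
  · rw [momentSolution, add_right_comm]
    congr! 4 with j
    funext i
    congr 1
    omega

theorem mul_momentSolution_sub_one_snd (hc₂ : c₂ 0 = 0) (n p : ℕ) (t : ℝ) :
    c₂ p * momentSolution a c₁ c₂ u n (p - 1) t =
      c₂ p * ∑ j ∈ range (n + p),
        Bt t j (fun i => a (n + p - (i + 1))) * (lower c₁ c₂ ^ j) u n (p - 1) := by
  rcases p with _ | p
  · simp [hc₂]
  · rw [momentSolution, ← add_assoc]
    congr! 4 with j
    funext i
    congr 1
    omega

theorem hasDerivAt_momentSolution (ha : StrictMono a) (hc₁ : c₁ 0 = 0) (hc₂ : c₂ 0 = 0)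
    (n p : ℕ) (t : ℝ) :
    HasDerivAt (momentSolution a c₁ c₂ u n p)
      (-a (n + p) * momentSolution a c₁ c₂ u n p t + c₁ n * momentSolution a c₁ c₂ u (n - 1) p t +
        c₂ p * momentSolution a c₁ c₂ u n (p - 1) t) t := by
  set w : ℕ → ℝ := fun j => (lower c₁ c₂ ^ j) u n p
  have hsplit : momentSolution a c₁ c₂ u n p = fun t =>
      ∑ j ∈ range (n + p), Bt t (j + 1) (fun i => a (n + p - i)) * w (j + 1) +
        Bt t 0 (fun i => a (n + p - i)) * w 0 :=
    funext fun t => sum_range_succ' _ _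
  have hsucc : ∀ j ∈ range (n + p),
      HasDerivAt (fun t => Bt t (j + 1) (fun i => a (n + p - i)) * w (j + 1))
        ((-a (n + p) * Bt t (j + 1) (fun i => a (n + p - i)) +
          Bt t j (fun i => a (n + p - (i + 1)))) * w (j + 1)) t := fun j hj =>
    (hasDerivAt_Bt_succ ((ha.strictAntiOn_sub _).mono
      (Set.Iic_subset_Iic.2 (by simpa using hj)))).mul_const _
  have hzero : HasDerivAt (fun t => Bt t 0 (fun i => a (n + p - i)) * w 0)
      (-a (n + p) * Bt t 0 (fun i => a (n + p - i)) * w 0) t := by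
    simp only [Bt_order_zero, Nat.sub_zero]
    exact (((hasDerivAt_id t).const_mul _).exp.mul_const _).congr_deriv
      (by simp only [id, mul_one]; ring)
  have hlower : ∑ j ∈ range (n + p), Bt t j (fun i => a (n + p - (i + 1))) * w (j + 1) =
      c₁ n * ∑ j ∈ range (n + p),
          Bt t j (fun i => a (n + p - (i + 1))) * (lower c₁ c₂ ^ j) u (n - 1) p +
        c₂ p * ∑ j ∈ range (n + p),
          Bt t j (fun i => a (n + p - (i + 1))) * (lower c₁ c₂ ^ j) u n (p - 1) := by
    simp only [w, lower_pow_succ_apply, mul_sum, ← sum_add_distrib]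
    exact sum_congr rfl fun j _ => by ring
  rw [hsplit]
  refine ((HasDerivAt.fun_sum hsucc).add hzero).congr_deriv ?_
  rw [mul_momentSolution_sub_one_fst hc₁, mul_momentSolution_sub_one_snd hc₂, add_assoc,
    ← hlower]
  simp only [add_mul, sum_add_distrib, mul_assoc, ← mul_sum]
  ring

theorem eqOn_momentSolution (ha : StrictMono a) (hc₁ : c₁ 0 = 0) (hc₂ : c₂ 0 = 0)
    {m : ℕ → ℕ → ℝ → ℝ}
    (hode : ∀ n p : ℕ, ∀ t : ℝ, 0 ≤ t → HasDerivWithinAt (m n p)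
      (-a (n + p) * m n p t + c₁ n * m (n - 1) p t + c₂ p * m n (p - 1) t) (Set.Ici 0) t)
    (hinit : ∀ n p, m n p 0 = u n p) (n p : ℕ) :
    Set.EqOn (m n p) (momentSolution a c₁ c₂ u n p) (Set.Ici 0) := by
  induction hN : n + p using Nat.strong_induction_on generalizing n p with
  | _ N ih =>
    have hfst : ∀ t, 0 ≤ t →
        c₁ n * m (n - 1) p t = c₁ n * momentSolution a c₁ c₂ u (n - 1) p t := by
      intro t ht
      rcases n with _ | n
      · simp [hc₁]
      · rw [Nat.add_sub_cancel, ih (n + p) (by omega) n p rfl ht]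
    have hsnd : ∀ t, 0 ≤ t →
        c₂ p * m n (p - 1) t = c₂ p * momentSolution a c₁ c₂ u n (p - 1) t := by
      intro t ht
      rcases p with _ | p
      · simp [hc₂]
      · rw [Nat.add_sub_cancel, ih (n + p) (by omega) n p rfl ht]
    refine eqOn_Ici_of_hasDerivWithinAt_linear (c := -a (n + p))
      (r := fun t => c₁ n * m (n - 1) p t + c₂ p * m n (p - 1) t) (fun t ht => ?_)
      (fun t ht => ?_) (by rw [hinit, momentSolution_time_zero ha])
    · exact (hode n p t ht).congr_deriv (add_assoc _ _ _)
    · refine (hasDerivAt_momentSolution ha hc₁ hc₂ n p t).hasDerivWithinAt.congr_deriv ?_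
      rw [hfst t ht, hsnd t ht, add_assoc]

theorem momentSolution_eq_sum (hc₁ : c₁ 0 = 0) (hc₂ : c₂ 0 = 0) (n p : ℕ) (t : ℝ) :
    momentSolution a c₁ c₂ u n p t = ∑ kl ∈ range (n + 1) ×ˢ range (p + 1),
      ((kl.1 + kl.2).choose kl.1 : ℝ) * (∏ r ∈ Icc (n - kl.1 + 1) n, c₁ r) *
        (∏ s ∈ Icc (p - kl.2 + 1) p, c₂ s) * Bt t (kl.1 + kl.2) (fun j => a (n + p - j)) *
        u (n - kl.1) (p - kl.2) := by
  set g : ℕ × ℕ → ℝ := fun kl => ((kl.1 + kl.2).choose kl.1 : ℝ) *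
    (∏ i ∈ range kl.1, c₁ (n - i)) * (∏ i ∈ range kl.2, c₂ (p - i)) *
    Bt t (kl.1 + kl.2) (fun j => a (n + p - j)) * u (n - kl.1) (p - kl.2)
  have hdiag : momentSolution a c₁ c₂ u n p t =
      ∑ j ∈ range (n + p + 1), ∑ kl ∈ antidiagonal j, g kl := by
    refine sum_congr rfl fun j _ => ?_
    rw [lower_pow_apply, mul_sum]
    refine sum_congr rfl fun kl hkl => ?_
    rw [HasAntidiagonal.mem_antidiagonal] at hkl
    subst hkl
    simp only [g]
    ring
  have hrect : ∑ j ∈ range (n + p + 1), ∑ kl ∈ antidiagonal j, g kl =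
      ∑ kl ∈ range (n + 1) ×ˢ range (p + 1), g kl := by
    rw [← sum_fiberwise_of_maps_to (g := fun kl : ℕ × ℕ => kl.1 + kl.2)
      (t := range (n + p + 1))
      (fun kl hkl => by simp only [mem_product, mem_range] at hkl ⊢; omega)]
    refine sum_congr rfl fun j _ => (sum_subset (fun kl hkl => ?_) fun kl hdiag hkl => ?_).symm
    · simp only [mem_filter] at hkl
      exact HasAntidiagonal.mem_antidiagonal.2 hkl.2
    · rw [HasAntidiagonal.mem_antidiagonal] at hdiag
      simp only [mem_filter, mem_product, mem_range, not_and] at hkl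
      rcases Nat.lt_or_ge n kl.1 with hn | hn
      · simp only [g, prod_range_sub_eq_zero hc₁ hn, mul_zero, zero_mul]
      · simp only [g, prod_range_sub_eq_zero hc₂ (by omega : p < kl.2), mul_zero, zero_mul]
  rw [hdiag, hrect]
  refine sum_congr rfl fun kl hkl => ?_
  simp only [mem_product, mem_range] at hkl
  simp only [g, prod_range_sub_eq_prod_Icc _ (Nat.lt_succ_iff.1 hkl.1),
    prod_range_sub_eq_prod_Icc _ (Nat.lt_succ_iff.1 hkl.2)]

end MomentSolution

theorem aC_strictMono {δ δ' : ℝ} (h : 0 < δ + δ') : StrictMono (aC δ δ') :=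
  strictMono_nat_of_lt_succ fun n => by
    unfold aC
    push_cast
    nlinarith [n.cast_nonneg (α := ℝ)]

theorem aC_zero (δ δ' : ℝ) : aC δ δ' 0 = 0 := by simp [aC]

theorem cC_zero (γ : ℝ) : cC γ 0 = 0 := by simp [cC]

theorem stmt0 (δ δ' : ℝ) (hδ : 2 ≤ δ) (hδ' : 2 ≤ δ') (x : ℝ)
    (m : ℕ → ℕ → ℝ → ℝ)
    (h00 : ∀ t : ℝ, 0 ≤ t → m 0 0 t = 1)
    (hinit : ∀ n p : ℕ, m n p 0 = x ^ n * (1 - x) ^ p)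
    (hode : ∀ n p : ℕ, (n, p) ≠ (0, 0) → ∀ t : ℝ, 0 ≤ t →
      HasDerivAt (m n p)
        (-(aC δ δ' (n + p)) * m n p t + cC δ' n * m (n - 1) p t + cC δ p * m n (p - 1) t) t) :
    ∀ n p : ℕ, ∀ t : ℝ, 0 ≤ t →
      m n p t = Real.exp (-(aC δ δ' (n + p)) * t) * x ^ n * (1 - x) ^ p +
        ∑ kl ∈ (Finset.range (n + 1) ×ˢ Finset.range (p + 1)).erase (0, 0),
          ((kl.1 + kl.2).choose kl.1 : ℝ) *
            (∏ r ∈ Finset.Icc (n - kl.1 + 1) n, cC δ' r) *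
            (∏ s ∈ Finset.Icc (p - kl.2 + 1) p, cC δ s) *
            Bt t (kl.1 + kl.2) (fun j => aC δ δ' (n + p - j)) *
            x ^ (n - kl.1) * (1 - x) ^ (p - kl.2) := by
  -- `m 0 0` is only known on `[0, ∞)`, hence derivatives within `Set.Ici 0`.
  have hode_Ici : ∀ n p : ℕ, ∀ t : ℝ, 0 ≤ t → HasDerivWithinAt (m n p)
      (-aC δ δ' (n + p) * m n p t + cC δ' n * m (n - 1) p t + cC δ p * m n (p - 1) t)
      (Set.Ici 0) t := by
    intro n p t ht
    by_cases hnp : (n, p) = (0, 0)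
    · obtain ⟨rfl, rfl⟩ := Prod.mk.inj hnp
      simp only [aC_zero, cC_zero, zero_mul, neg_zero, add_zero]
      exact (hasDerivWithinAt_const t _ 1).congr h00 (h00 t ht)
    · exact (hode n p hnp t ht).hasDerivWithinAt
  intro n p t ht
  rw [eqOn_momentSolution (aC_strictMono (by linarith)) (cC_zero δ') (cC_zero δ) hode_Ici hinit n p ht,
    momentSolution_eq_sum (cC_zero δ') (cC_zero δ),
    ← add_sum_erase _ _ (show ((0 : ℕ), (0 : ℕ)) ∈ range (n + 1) ×ˢ range (p + 1) by simp)]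
  simp only [mul_assoc]
  congr 1
  simp [Bt_order_zero]
end

section
/- Let δ, δ' ≥ 2 be real numbers. For all integers i, j with 0 ≤ i ≤ j and all integers k, l with 0 ≤ k ≤ i, 0 ≤ l ≤ j−i and (k,l) ≠ (0,0), the following identity holds: C(k+l, k) · (Π_{r=i−k+1}^{i} c_r(δ')) · (Π_{s=j−i−l+1}^{j−i} c_s(δ)) · B(i−k+δ'/2, j−i−l+δ/2) / B(i+δ'/2, j−i+δ/2) = [C(i,k) C(j−i,l) / C(j, k+l)] · Π_{m=j−k−l+1}^{j} a_m, where C(m,k) denotes the binomial coefficient and an empty product equals 1. -/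
open Finset Real

/-- Euler Beta function `B(a,b) = Γ(a)Γ(b)/Γ(a+b)`. -/
noncomputable def Beta (a b : ℝ) : ℝ := Real.Gamma a * Real.Gamma b / Real.Gamma (a + b)

/-!
Since `c_r(γ) = 2r (r - 1 + γ/2)`, the functional equation of `Γ` telescopes the products:
`∏_{r=p+1}^{p+k} c_r(γ) = 2^k (p+k)! Γ(p+k+γ/2) / (p! Γ(p+γ/2))`, and `a_m = c_m(δ+δ')`.
Writing `i = a + k` and `j - i = b + l`, both sides of the identity become the same quotient of
factorials and Gamma values.
-/

open Nat in
theorem factorial_mul_Gamma_mul_prod_cC {γ : ℝ} (hγ : 0 < γ) (p k : ℕ) :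
    (p ! : ℝ) * Gamma (p + γ / 2) * ∏ r ∈ Icc (p + 1) (p + k), cC γ r
      = 2 ^ k * (p + k)! * Gamma ((p + k : ℕ) + γ / 2) := by
  induction k with
  | zero => simp
  | succ k ih =>
    have hGamma : Gamma ((p + (k + 1) : ℕ) + γ / 2)
        = ((p + k : ℕ) + γ / 2) * Gamma ((p + k : ℕ) + γ / 2) := by
      rw [← Gamma_add_one (by positivity)]
      congr 1
      push_cast
      ring
    rw [← add_assoc, prod_Icc_succ_top (by omega), ← mul_assoc, ih, add_assoc, hGamma,
      ← add_assoc, factorial_succ, cC]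
    push_cast
    ring

open Nat in
theorem prod_Icc_cC {γ : ℝ} (hγ : 0 < γ) (p k : ℕ) :
    ∏ r ∈ Icc (p + 1) (p + k), cC γ r
      = 2 ^ k * (p + k)! * Gamma ((p + k : ℕ) + γ / 2) / (p ! * Gamma (p + γ / 2)) := by
  rw [eq_div_iff (by positivity), ← factorial_mul_Gamma_mul_prod_cC hγ]
  ring

theorem aC_eq_cC_add (δ δ' : ℝ) (m : ℕ) : aC δ δ' m = cC (δ + δ') m := by
  unfold aC cC
  ring

theorem choose_mul_prod_cC_mul_Beta_div_Beta {δ δ' : ℝ} (hδ : 0 < δ) (hδ' : 0 < δ')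
    (a b k l : ℕ) :
    ((k + l).choose k : ℝ) * (∏ r ∈ Icc (a + 1) (a + k), cC δ' r) *
        (∏ s ∈ Icc (b + 1) (b + l), cC δ s) *
        Beta (a + δ' / 2) (b + δ / 2) / Beta ((a + k : ℕ) + δ' / 2) ((b + l : ℕ) + δ / 2)
      = ((a + k).choose k * (b + l).choose l / (a + b + (k + l)).choose (k + l) : ℝ) *
          ∏ m ∈ Icc (a + b + 1) (a + b + (k + l)), aC δ δ' m := by
  have hδδ' : 0 < δ + δ' := by positivity
  simp only [aC_eq_cC_add, prod_Icc_cC hδ, prod_Icc_cC hδ', prod_Icc_cC hδδ', Beta]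
  rw [Nat.cast_choose ℝ (Nat.le_add_left k a), Nat.cast_choose ℝ (Nat.le_add_left l b),
    Nat.cast_choose ℝ (Nat.le_add_left (k + l) (a + b)), Nat.cast_choose ℝ (Nat.le_add_right k l)]
  simp only [Nat.add_sub_cancel, Nat.add_sub_cancel_left]
  have hΓ : ∀ x y : ℕ, Gamma (x + δ' / 2 + (y + δ / 2)) = Gamma ((x + y : ℕ) + (δ + δ') / 2) :=
    fun x y ↦ by congr 1; push_cast; ring
  rw [hΓ, hΓ, Nat.add_add_add_comm]
  field_simp
  ring

theorem stmt2_general (δ δ' : ℝ) (hδ : 2 ≤ δ) (hδ' : 2 ≤ δ')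
    (i j k l : ℕ) (hij : i ≤ j) (hk : k ≤ i) (hl : l ≤ j - i) :
    ((k + l).choose k : ℝ) *
        (∏ r ∈ Finset.Icc (i - k + 1) i, cC δ' r) *
        (∏ s ∈ Finset.Icc (j - i - l + 1) (j - i), cC δ s) *
        Beta (((i - k : ℕ) : ℝ) + δ' / 2) (((j - i - l : ℕ) : ℝ) + δ / 2) /
        Beta ((i : ℝ) + δ' / 2) (((j - i : ℕ) : ℝ) + δ / 2)
      = ((i.choose k : ℝ) * ((j - i).choose l : ℝ) / (j.choose (k + l) : ℝ)) *
          ∏ m ∈ Finset.Icc (j - k - l + 1) j, aC δ δ' m := by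
  obtain ⟨a, rfl⟩ := Nat.exists_eq_add_of_le' hk
  obtain ⟨b, hb⟩ := Nat.exists_eq_add_of_le' hl
  obtain rfl : j = a + b + (k + l) := by omega
  rw [hb, show a + b + (k + l) - k - l = a + b by omega, Nat.add_sub_cancel,
    Nat.add_sub_cancel]
  exact choose_mul_prod_cC_mul_Beta_div_Beta (by linarith) (by linarith) a b k l

theorem stmt2 (δ δ' : ℝ) (hδ : 2 ≤ δ) (hδ' : 2 ≤ δ')
    (i j k l : ℕ) (hij : i ≤ j) (hk : k ≤ i) (hl : l ≤ j - i) (hkl : (k, l) ≠ (0, 0)) :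
    ((k + l).choose k : ℝ) *
        (∏ r ∈ Finset.Icc (i - k + 1) i, cC δ' r) *
        (∏ s ∈ Finset.Icc (j - i - l + 1) (j - i), cC δ s) *
        Beta (((i - k : ℕ) : ℝ) + δ' / 2) (((j - i - l : ℕ) : ℝ) + δ / 2) /
        Beta ((i : ℝ) + δ' / 2) (((j - i : ℕ) : ℝ) + δ / 2)
      = ((i.choose k : ℝ) * ((j - i).choose l : ℝ) / (j.choose (k + l) : ℝ)) *
          ∏ m ∈ Finset.Icc (j - k - l + 1) j, aC δ δ' m :=
  stmt2_general δ δ' hδ hδ' i j k l hij hk hl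
end

section
/- Let k ≥ 0 be an integer, let b_0 > b_1 > … > b_k be strictly decreasing real numbers, and let t ≥ 0. Then B_t(b_0, b_1, …, b_k) ≥ 0. -/
/-! `B_t(b_0, …, b_k)` is, up to the sign `(-1)^k`, the divided difference of `x ↦ exp (-x t)` at
the nodes `b_0, …, b_k`. We argue by induction on `k`: the function
`G s = exp (b_{k+1} s) B_s(b_0, …, b_{k+1})` has derivative `exp (b_{k+1} s) B_s(b_0, …, b_k)`,
which is nonnegative by induction, and `G 0 = 0` because the divided difference of a constant
vanishes once there are at least two nodes. Hence `G ≥ 0` on `[0, ∞)`. -/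

open Finset Real

theorem Lagrange.sum_one_div_prod_sub_eq_zero {F ι : Type*} [Field F] [DecidableEq ι]
    {s : Finset ι} {v : ι → F} (hvs : Set.InjOn v s) (hs : 1 < #s) :
    ∑ i ∈ s, 1 / ∏ j ∈ s.erase i, (v i - v j) = 0 := by
  have h := Lagrange.coeff_eq_sum hvs (P := 1) (by
    rw [Polynomial.degree_one]; exact_mod_cast (by omega : 0 < #s))
  simpa [Polynomial.coeff_one, show #s - 1 ≠ 0 by omega] using h.symm

variable {b : ℕ → ℝ} {k : ℕ}

theorem prod_erase_sub_eq_neg_one_pow_mul_prod_abs (hb : StrictAntiOn b (Set.Iic k)) {j : ℕ}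
    (hj : j ≤ k) :
    ∏ l ∈ (range (k + 1)).erase j, (b j - b l) =
      (-1) ^ j * ∏ l ∈ (range (k + 1)).erase j, |b j - b l| := by
  have hsign : ∀ l ∈ (range (k + 1)).erase j,
      b j - b l = (if l < j then -1 else 1) * |b j - b l| := by
    intro l hl
    obtain ⟨hlj, hlk⟩ := mem_erase.1 hl
    have hlk : l ≤ k := Nat.lt_succ_iff.1 (mem_range.1 hlk)
    split_ifs with h
    · rw [abs_of_neg (sub_neg.2 (hb hlk hj h))]; ring
    · rw [abs_of_pos (sub_pos.2 (hb hj hlk (by omega)))]; ring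
  have hbelow : ((range (k + 1)).erase j).filter (· < j) = range j := by
    ext l; simp only [mem_filter, mem_erase, mem_range]; omega
  rw [prod_congr rfl hsign, prod_mul_distrib, prod_ite, prod_const, prod_const, one_pow, mul_one,
    hbelow, card_range]

theorem Bt_zero_eq_zero (hk : 0 < k) (hb : StrictAntiOn b (Set.Iic k)) : Bt 0 k b = 0 := by
  have hinj : Set.InjOn b (range (k + 1)) :=
    hb.injOn.mono fun l hl => Nat.lt_succ_iff.1 (mem_range.1 hl)
  rw [Bt]
  refine (congrArg _ ?_).trans (mul_zero _)
  refine (sum_congr rfl fun j hj => ?_).trans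
    (Lagrange.sum_one_div_prod_sub_eq_zero hinj (by simp; omega))
  rw [prod_erase_sub_eq_neg_one_pow_mul_prod_abs hb (Nat.lt_succ_iff.1 (mem_range.1 hj)),
    mul_zero, exp_zero, mul_one, one_div, mul_inv, ← inv_pow, inv_neg, inv_one, div_eq_mul_inv]

noncomputable def btCoeff (k : ℕ) (b : ℕ → ℝ) (j : ℕ) : ℝ :=
  (-1) ^ (k + j) / ∏ l ∈ (range (k + 1)).erase j, |b j - b l|

theorem exp_mul_Bt (c t : ℝ) (k : ℕ) (b : ℕ → ℝ) :
    exp (c * t) * Bt t k b = ∑ j ∈ range (k + 1), btCoeff k b j * exp ((c - b j) * t) := by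
  rw [Bt, ← mul_assoc, mul_sum]
  refine sum_congr rfl fun j _ => ?_
  rw [btCoeff, sub_eq_add_neg, add_mul, exp_add, pow_add]
  ring

theorem btCoeff_succ_mul_sub (hb : StrictAntiOn b (Set.Iic (k + 1))) {j : ℕ} (hj : j ≤ k) :
    btCoeff (k + 1) b j * (b (k + 1) - b j) = btCoeff k b j := by
  have hgap : 0 < b j - b (k + 1) :=
    sub_pos.2 (hb (by simp; omega) (Set.mem_Iic.2 le_rfl) (by omega))
  have hsplit : (range (k + 1 + 1)).erase j = insert (k + 1) ((range (k + 1)).erase j) := by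
    rw [range_add_one, erase_insert_of_ne (by omega)]
  rw [btCoeff, btCoeff, hsplit, prod_insert (by simp), abs_of_pos hgap,
    show k + 1 + j = k + j + 1 by omega, pow_succ]
  field_simp
  ring

theorem hasDerivAt_exp_mul_Bt_succ (hb : StrictAntiOn b (Set.Iic (k + 1))) (s : ℝ) :
    HasDerivAt (fun u => exp (b (k + 1) * u) * Bt u (k + 1) b)
      (exp (b (k + 1) * s) * Bt s k b) s := by
  simp_rw [exp_mul_Bt]
  refine (HasDerivAt.fun_sum fun j (_ : j ∈ range (k + 1 + 1)) =>
    (((hasDerivAt_id s).const_mul (b (k + 1) - b j)).exp).const_mul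
      (btCoeff (k + 1) b j)).congr_deriv ?_
  rw [sum_range_succ, sub_self, zero_mul, zero_mul, mul_zero, mul_zero, add_zero]
  refine sum_congr rfl fun j hj => ?_
  rw [← btCoeff_succ_mul_sub hb (Nat.lt_succ_iff.1 (mem_range.1 hj)), id]
  ring

theorem Bt_nonneg (hb : StrictAntiOn b (Set.Iic k)) {t : ℝ} (ht : 0 ≤ t) : 0 ≤ Bt t k b := by
  induction k generalizing t with
  | zero => simp [Bt, exp_nonneg]
  | succ k ih =>
    set G : ℝ → ℝ := fun u => exp (b (k + 1) * u) * Bt u (k + 1) b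
    have hG : MonotoneOn G (Set.Ici 0) := by
      refine monotoneOn_of_hasDerivWithinAt_nonneg (convex_Ici 0)
        (fun s _ => (hasDerivAt_exp_mul_Bt_succ hb s).continuousAt.continuousWithinAt)
        (fun s _ => (hasDerivAt_exp_mul_Bt_succ hb s).hasDerivWithinAt) fun s hs => ?_
      rw [interior_Ici] at hs
      exact mul_nonneg (exp_nonneg _) (ih (hb.mono (Set.Iic_subset_Iic.2 k.le_succ)) hs.le)
    have hG0 : G 0 = 0 := by simp [G, Bt_zero_eq_zero k.succ_pos hb]
    have hGt : 0 ≤ G t := hG0 ▸ hG Set.self_mem_Ici ht ht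
    exact nonneg_of_mul_nonneg_right hGt (exp_pos _)

theorem stmt5 (k : ℕ) (b : ℕ → ℝ) (hb : ∀ m : ℕ, m < k → b (m + 1) < b m)
    (t : ℝ) (ht : 0 ≤ t) :
    0 ≤ Bt t k b :=
  Bt_nonneg (strictAntiOn_Iic_of_succ_lt hb) ht
end

section
/- Let δ, δ' ≥ 2 be real numbers and let L be the differential operator acting on twice differentiable functions h : (0,1) → ℝ by Lh(x) = 2x(1−x) h''(x) + [−δx + δ'(1−x)] h'(x). Then for all n, p ∈ ℕ and all x ∈ (0,1): L h_{n,p}(x) = −a_{n+p} h_{n,p}(x) + c_n(δ') h_{n−1,p}(x) + c_p(δ) h_{n,p−1}(x), where h_{i,j}(x) = x^i (1−x)^j and any term with a negative index is omitted (consistently with c_0(γ) = 0). -/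
/-!
Both sides are linear combinations of products `x^i (1-x)^j`. After differentiating
`h_{n,p}` twice, every term is brought to the three shapes `h_{n,p}`, `h_{n-1,p}`,
`h_{n,p-1}` by the relations `n x h_{n-1,p} = n h_{n,p}` and `p (1-x) h_{n,p-1} = p h_{n,p}`,
which hold for all `n, p` because the coefficient vanishes exactly when the index
`n - 1` or `p - 1` is truncated.
-/

open Finset Real

/-- `hF i j x = x^i (1-x)^j`. -/
noncomputable def hF (i j : ℕ) (x : ℝ) : ℝ := x ^ i * (1 - x) ^ j

lemma natCast_mul_natCast_sub_one (n : ℕ) : (n : ℝ) * ((n - 1 : ℕ) : ℝ) = n * (n - 1) := by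
  cases n <;> simp

lemma natCast_mul_mul_hF_sub_one_left (n p : ℕ) (x : ℝ) :
    (n : ℝ) * (x * hF (n - 1) p x) = n * hF n p x := by
  cases n
  · simp
  · simp only [hF, Nat.add_sub_cancel, pow_succ]
    ring

lemma natCast_mul_mul_hF_sub_one_right (n p : ℕ) (x : ℝ) :
    (p : ℝ) * ((1 - x) * hF n (p - 1) x) = p * hF n p x := by
  cases p
  · simp
  · simp only [hF, Nat.add_sub_cancel, pow_succ]
    ring

lemma hasDerivAt_hF (n p : ℕ) (x : ℝ) :
    HasDerivAt (hF n p) (n * hF (n - 1) p x - p * hF n (p - 1) x) x :=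
  ((hasDerivAt_pow n x).fun_mul (((hasDerivAt_id' x).const_sub 1).fun_pow p)).congr_deriv
    (by simp only [hF]; ring)

lemma deriv_hF (n p : ℕ) :
    deriv (hF n p) = fun x => n * hF (n - 1) p x - p * hF n (p - 1) x :=
  funext fun x => (hasDerivAt_hF n p x).deriv

lemma deriv_deriv_hF (n p : ℕ) (x : ℝ) :
    deriv (deriv (hF n p)) x =
      n * (((n - 1 : ℕ) : ℝ) * hF (n - 1 - 1) p x - p * hF (n - 1) (p - 1) x)
        - p * (n * hF (n - 1) (p - 1) x - ((p - 1 : ℕ) : ℝ) * hF n (p - 1 - 1) x) := by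
  rw [deriv_hF]
  exact (((hasDerivAt_hF _ _ x).const_mul _).sub ((hasDerivAt_hF _ _ x).const_mul _)).deriv

theorem stmt7_general (δ δ' : ℝ) (n p : ℕ) (x : ℝ) :
    2 * x * (1 - x) * deriv (deriv (hF n p)) x + (-δ * x + δ' * (1 - x)) * deriv (hF n p) x
      = -(aC δ δ' (n + p)) * hF n p x + cC δ' n * hF (n - 1) p x + cC δ p * hF n (p - 1) x := by
  rw [deriv_deriv_hF, deriv_hF]
  set m : ℝ := ((n - 1 : ℕ) : ℝ)
  set q : ℝ := ((p - 1 : ℕ) : ℝ)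
  have hcast_n := natCast_mul_natCast_sub_one n
  have hcast_p := natCast_mul_natCast_sub_one p
  have hx_np := natCast_mul_mul_hF_sub_one_left n p x
  have hx_nq := natCast_mul_mul_hF_sub_one_left n (p - 1) x
  have hx_mp := natCast_mul_mul_hF_sub_one_left (n - 1) p x
  have h1x_np := natCast_mul_mul_hF_sub_one_right n p x
  have h1x_nq := natCast_mul_mul_hF_sub_one_right n (p - 1) x
  simp only [aC, cC, Nat.cast_add]
  linear_combination (2 * n * (1 - x)) * hx_mp + (-2 * m - δ - δ') * hx_np
    + 2 * (hF (n - 1) p x - hF n p x) * hcast_n - 4 * (1 - x) * p * hx_nq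
    + (-4 * n - 2 * q - δ - δ') * h1x_np + 2 * x * p * h1x_nq
    + 2 * (hF n (p - 1) x - hF n p x) * hcast_p

theorem stmt7 (δ δ' : ℝ) (hδ : 2 ≤ δ) (hδ' : 2 ≤ δ') (n p : ℕ)
    (x : ℝ) (hx : x ∈ Set.Ioo (0 : ℝ) 1) :
    2 * x * (1 - x) * deriv (deriv (hF n p)) x + (-δ * x + δ' * (1 - x)) * deriv (hF n p) x
      = -(aC δ δ' (n + p)) * hF n p x + cC δ' n * hF (n - 1) p x + cC δ p * hF n (p - 1) x :=
  stmt7_general δ δ' n p x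
end

section
/- Let δ, δ' ≥ 2 be real numbers. Then for every integer i ≥ 1 and every integer j with 0 ≤ j ≤ i−1: Σ_{k=j}^{i} (−1)^{k+j} · (Π_{m=i−k+1}^{i} a_m) / (Π_{0≤l≤k, l≠j} |a_{i−j} − a_{i−l}|) = 0, where an empty product equals 1. -/
open Finset Real

/-!
Put `X l = a_{i-l}`. After removing the absolute values (exactly the `j` factors with `l < j`
are negative), the sum is `Σ_{k=j}^{i} (-1)^k ∏_{l<k} X l / ∏_{l≤k, l≠j} (X j - X l)`.
Its partial sums up to `n` telescope to `(-1)^n ∏_{l≤n} X l / (X j ∏_{l≤n, l≠j} (X j - X l))`,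
which vanishes at `n = i` because `X i = a_0 = 0`.
-/

theorem mul_sum_Icc_alternating_prod_div {K : Type*} [Field K] (X : ℕ → K) {j n : ℕ}
    (hjn : j ≤ n) (hX : ∀ l ≤ n, l ≠ j → X l ≠ X j) :
    X j * ∑ k ∈ Icc j n,
        (-1) ^ k * (∏ l ∈ range k, X l) / ∏ l ∈ (range (k + 1)).erase j, (X j - X l)
      = (-1) ^ n * (∏ l ∈ range (n + 1), X l) / ∏ l ∈ (range (n + 1)).erase j, (X j - X l) := by
  induction n, hjn using Nat.le_induction with
  | base =>
    have herase : (range (j + 1)).erase j = range j := by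
      rw [range_add_one, erase_insert notMem_range_self]
    rw [Icc_self, sum_singleton, herase, prod_range_succ]
    ring
  | succ n hjn ih =>
    have hD : ∏ l ∈ (range (n + 1)).erase j, (X j - X l) ≠ 0 :=
      prod_ne_zero_iff.mpr fun l hl => by
        rw [mem_erase, mem_range] at hl
        exact sub_ne_zero.mpr (hX l (by omega) hl.1).symm
    have hlast : X j - X (n + 1) ≠ 0 := sub_ne_zero.mpr (hX (n + 1) le_rfl (by omega)).symm
    have herase : (range (n + 1 + 1)).erase j = insert (n + 1) ((range (n + 1)).erase j) := by
      rw [range_add_one, erase_insert_of_ne (by omega)]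
    rw [sum_Icc_succ_top (by omega), mul_add, ih fun l hl => hX l (by omega), herase,
      prod_insert (by simp), prod_range_succ _ (n + 1)]
    field_simp
    ring

theorem prod_Icc_sub_add_one_eq_prod_range {M : Type*} [CommMonoid M] (f : ℕ → M) {i k : ℕ}
    (hk : k ≤ i) : ∏ m ∈ Icc (i - k + 1) i, f m = ∏ l ∈ range k, f (i - l) := by
  rw [← Nat.Ico_zero_eq_range, prod_Ico_reflect f 0 (by omega), ← Ico_add_one_right_eq_Icc,
    Nat.sub_zero, show i + 1 - k = i - k + 1 by omega]

theorem prod_erase_abs_sub_of_strictAntiOn {R : Type*} [Field R] [LinearOrder R]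
    [IsStrictOrderedRing R] {X : ℕ → R} {j k : ℕ} (hX : StrictAntiOn X (Set.Iic k))
    (hjk : j ≤ k) :
    ∏ l ∈ (range (k + 1)).erase j, |X j - X l|
      = (-1) ^ j * ∏ l ∈ (range (k + 1)).erase j, (X j - X l) := by
  have habs : ∀ l ∈ (range (k + 1)).erase j,
      |X j - X l| = (if l < j then -1 else 1) * (X j - X l) := by
    intro l hl
    rw [mem_erase, mem_range] at hl
    have hjX : j ∈ Set.Iic k := Set.mem_Iic.mpr hjk
    have hlX : l ∈ Set.Iic k := Set.mem_Iic.mpr (by omega)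
    rcases lt_or_gt_of_ne hl.1 with hlj | hjl
    · rw [if_pos hlj, abs_of_neg (sub_neg.mpr (hX hlX hjX hlj))]
      ring
    · rw [if_neg (by omega), abs_of_pos (sub_pos.mpr (hX hjX hlX hjl))]
      ring
  have hneg : {l ∈ (range (k + 1)).erase j | l < j} = range j := by
    ext l
    simp only [mem_filter, mem_erase, mem_range]
    omega
  rw [prod_congr rfl habs, prod_mul_distrib, prod_ite, prod_const, prod_const, one_pow,
    mul_one, hneg, card_range]

theorem sum_alternating_prod_div_prod_abs_sub_eq_zero {R : Type*} [Field R] [LinearOrder R]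
    [IsStrictOrderedRing R] {a : ℕ → R} (ha : StrictMono a) (ha0 : a 0 = 0) {i j : ℕ}
    (hji : j < i) :
    ∑ k ∈ Icc j i,
        (-1 : R) ^ (k + j) * (∏ m ∈ Icc (i - k + 1) i, a m) /
          (∏ l ∈ (range (k + 1)).erase j, |a (i - j) - a (i - l)|)
      = 0 := by
  set X : ℕ → R := fun l => a (i - l) with hXdef
  have hanti : StrictAntiOn X (Set.Iic i) := fun l hl m hm hlm =>
    ha (by simp only [Set.mem_Iic] at hl hm; omega)
  have hXj : X j ≠ 0 := (ha0 ▸ ha (show 0 < i - j by omega)).ne'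
  have hXi : X i = 0 := by simp [hXdef, ha0]
  have hterm : ∀ k ∈ Icc j i,
      (-1 : R) ^ (k + j) * (∏ m ∈ Icc (i - k + 1) i, a m) /
          (∏ l ∈ (range (k + 1)).erase j, |a (i - j) - a (i - l)|)
        = (-1) ^ k * (∏ l ∈ range k, X l) / ∏ l ∈ (range (k + 1)).erase j, (X j - X l) := by
    intro k hk
    rw [mem_Icc] at hk
    rw [prod_Icc_sub_add_one_eq_prod_range _ hk.2,
      prod_erase_abs_sub_of_strictAntiOn (hanti.mono (Set.Iic_subset_Iic.mpr hk.2)) hk.1,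
      pow_add, mul_right_comm, mul_comm ((-1 : R) ^ j),
      mul_div_mul_right _ _ (pow_ne_zero j (by norm_num))]
  rw [sum_congr rfl hterm]
  refine (mul_eq_zero.mp ?_).resolve_left hXj
  rw [mul_sum_Icc_alternating_prod_div X hji.le
    fun l hl hlj => hanti.injOn.ne (Set.mem_Iic.mpr hl) (Set.mem_Iic.mpr hji.le) hlj,
    prod_range_succ, hXi]
  simp

theorem stmt17 (δ δ' : ℝ) (hδ : 2 ≤ δ) (hδ' : 2 ≤ δ')
    (i : ℕ) (hi : 1 ≤ i) (j : ℕ) (hj : j ≤ i - 1) :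
    ∑ k ∈ Finset.Icc j i,
        (-1 : ℝ) ^ (k + j) * (∏ m ∈ Finset.Icc (i - k + 1) i, aC δ δ' m) /
          (∏ l ∈ (Finset.range (k + 1)).erase j, |aC δ δ' (i - j) - aC δ δ' (i - l)|)
      = 0 :=
  sum_alternating_prod_div_prod_abs_sub_eq_zero (aC_strictMono (by linarith)) (aC_zero δ δ')
    (by omega)
end
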